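/- Let W_0 = {x ∈ W : |{i ∈ ℤ : x_i ≠ 0}| < ∞} and for x ∈ W let Z(x) = {i ∈ ℤ : x_i = 0}. Then W_0 is dense in W, and if x, x' ∈ W_0 satisfy Z(x) = Z(x'), then x = x'. -/

import Mathlib

open Set Function

/-- The map `x ↦ σᵐ(x)` on the full shift `A^ℤ`, where `σᵐ(x)_i = x_{i+m}`. -/
def shiftZ (A : Type*) (m : ℤ) : (ℤ → A) → ℤ → A := fun x i => x (i + m)

/-- The shift map `σ` on the full shift `A^ℤ`: `σ(x)_i = x_{i+1}`. -/
abbrev shiftMap (A : Type*) : (ℤ → A) → ℤ → A := shiftZ A 1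

/-- The inverse shift map `σ⁻¹`: `σ⁻¹(x)_i = x_{i-1}`. -/
abbrev shiftInv (A : Type*) : (ℤ → A) → ℤ → A := shiftZ A (-1)

/-- The reversal map `ρ`: `ρ(x)_i = x_{-i}`. -/
def revMap (A : Type*) : (ℤ → A) → ℤ → A := fun x i => x (-i)

/-- A shift space over `A`: a nonempty closed subset of `A^ℤ` with `σ(X) = X`. -/
def IsShiftSpace {A : Type*} [TopologicalSpace A] (X : Set (ℤ → A)) : Prop :=
  X.Nonempty ∧ IsClosed X ∧ shiftMap A '' X = X

/-- The word `w` occurs in `x` at position `i`, i.e. `x_{[i, i+|w|-1]} = w`. -/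
def OccursAt {A : Type*} (w : List A) (x : ℤ → A) (i : ℤ) : Prop :=
  ∀ k : Fin w.length, x (i + (k : ℕ)) = w.get k

/-- `w` is a block of `X`: it occurs in some point of `X`. -/
def IsBlockOf {A : Type*} (X : Set (ℤ → A)) (w : List A) : Prop :=
  ∃ x ∈ X, ∃ i : ℤ, OccursAt w x i

/-- `X` is irreducible: any two blocks can be joined by a block. -/
def ShiftIrreducible {A : Type*} (X : Set (ℤ → A)) : Prop :=
  ∀ u v : List A, IsBlockOf X u → IsBlockOf X v → ∃ w : List A, IsBlockOf X (u ++ w ++ v)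

/-- `w` is a finitary (intrinsically synchronizing) block of `X`. -/
def IsFinitary {A : Type*} (X : Set (ℤ → A)) (w : List A) : Prop :=
  IsBlockOf X w ∧ ∀ u v : List A, IsBlockOf X (u ++ w) → IsBlockOf X (w ++ v) →
    IsBlockOf X (u ++ w ++ v)

/-- A synchronized system: an irreducible shift space with a finitary block. -/
def IsSynchronized {A : Type*} [TopologicalSpace A] (X : Set (ℤ → A)) : Prop :=
  IsShiftSpace X ∧ ShiftIrreducible X ∧ ∃ w : List A, IsFinitary X w

/-- `φ` (as a map of the ambient full shift) restricts to a flip for `(X, σ_X)`: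
a homeomorphism `X → X` with `φ ∘ φ = id` and `φ ∘ σ_X = σ_X⁻¹ ∘ φ`.
(Being a homeomorphism is automatic from continuity and `φ ∘ φ = id` on `X`.) -/
def IsFlip {A : Type*} [TopologicalSpace A] (X : Set (ℤ → A))
    (φ : (ℤ → A) → ℤ → A) : Prop :=
  MapsTo φ X X ∧ ContinuousOn φ X ∧ (∀ x ∈ X, φ (φ x) = x) ∧
    ∀ x ∈ X, φ (shiftMap A x) = shiftInv A (φ x)

/-- The shift-flip systems `(X, σ_X, φ)` and `(Y, σ_Y, ψ)` are conjugate: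
there is a homeomorphism `Φ : X → Y` with `Φ ∘ σ_X = σ_Y ∘ Φ` and `Φ ∘ φ = ψ ∘ Φ`. -/
def SystemConj {A B : Type*} [TopologicalSpace A] [TopologicalSpace B]
    (X : Set (ℤ → A)) (φ : (ℤ → A) → ℤ → A)
    (Y : Set (ℤ → B)) (ψ : (ℤ → B) → ℤ → B) : Prop :=
  ∃ (Φ : (ℤ → A) → ℤ → B) (Ψ : (ℤ → B) → ℤ → A),
    MapsTo Φ X Y ∧ ContinuousOn Φ X ∧ MapsTo Ψ Y X ∧ ContinuousOn Ψ Y ∧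
    InvOn Ψ Φ X Y ∧
    (∀ x ∈ X, Φ (shiftMap A x) = shiftMap B (Φ x)) ∧ ∀ x ∈ X, Φ (φ x) = ψ (Φ x)

/-- Two flips `φ, φ'` for `(X, σ_X)` are conjugate. -/
def FlipConj {A : Type*} [TopologicalSpace A] (X : Set (ℤ → A))
    (φ φ' : (ℤ → A) → ℤ → A) : Prop :=
  SystemConj X φ X φ'

/-- `F(φ; n) = {x ∈ X : σ_X^n(x) = x and φ(x) = x}`. -/
def flipFix {A : Type*} (X : Set (ℤ → A)) (φ : (ℤ → A) → ℤ → A) (n : ℕ) :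
    Set (ℤ → A) :=
  {x ∈ X | (shiftMap A)^[n] x = x ∧ φ x = x}

/-- `A(φ)`: points of `X` in which some finitary block occurs infinitely often and
which differ from their `φ`-image in at least one but only finitely many coordinates. -/
def flipAsym {A : Type*} (X : Set (ℤ → A)) (φ : (ℤ → A) → ℤ → A) :
    Set (ℤ → A) :=
  {x ∈ X | (∃ w : List A, IsFinitary X w ∧ {i : ℤ | OccursAt w x i}.Infinite) ∧
    {i : ℤ | φ x i ≠ x i}.Nonempty ∧ {i : ℤ | φ x i ≠ x i}.Finite}

/-- `x` is a bi-infinite concatenation of words from `C`. -/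
def IsConcat {A : Type*} (C : Set (List A)) (x : ℤ → A) : Prop :=
  ∃ t : ℤ → ℤ, StrictMono t ∧ (∀ n : ℤ, ∃ j : ℤ, t j ≤ n ∧ n < t (j + 1)) ∧
    ∀ j : ℤ, ∃ w ∈ C, t (j + 1) = t j + w.length ∧ OccursAt w x (t j)

/-- A coded system: a shift space in which the set of bi-infinite concatenations of
words from some code `C` is dense. -/
def IsCoded {A : Type*} [TopologicalSpace A] (X : Set (ℤ → A)) : Prop :=
  IsShiftSpace X ∧ ∃ C : Set (List A), closure {x | IsConcat C x} = X
/-- The set `I = ⋃_{k ≥ 1} [2^{2k}, 2^{2k+1}] ⊆ ℕ`. -/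
def wordI : Set ℕ := {n | ∃ k : ℕ, 1 ≤ k ∧ 2 ^ (2 * k) ≤ n ∧ n ≤ 2 ^ (2 * k + 1)}

/-- The set `J = {(0,0), (1,1), (1,2), (2,1), (2,2)} ⊆ A × A`, `A = {0,1,2}`. -/
def setJ : Set (Fin 3 × Fin 3) := {(0, 0), (1, 1), (1, 2), (2, 1), (2, 2)}

/-- The word `0^n` over `{0,1,2}`. -/
def zeros (n : ℕ) : List (Fin 3) := List.replicate n 0

/-- A word `w` over `{0,1,2}` is stable if (1) neither `12` nor `21` occurs in `w`, and
(2) whenever `x ∈ A^ℤ` satisfies `x_{[1, 3|w|+2]} = 0^{|w|+1} w 0^{|w|+1}`, and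
`1 ≤ n ≤ |w|`, `a ∈ {1,2}`, `|w|+1 ≤ i < j ≤ 2|w|+2` are such that `x_{[i,j]} = 0 aⁿ 0`,
then `a = 1` iff `(n, (x_{i-n}, x_{j+n})) ∈ (I × J) ∪ (Iᶜ × Jᶜ)`. -/
def Stable (w : List (Fin 3)) : Prop :=
  (¬ [1, 2] <:+: w) ∧ (¬ [2, 1] <:+: w) ∧
    ∀ x : ℤ → Fin 3,
      OccursAt (zeros (w.length + 1) ++ w ++ zeros (w.length + 1)) x 1 →
      ∀ (n : ℕ) (a : Fin 3) (i j : ℤ),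
        1 ≤ n → n ≤ w.length → (a = 1 ∨ a = 2) →
        (w.length : ℤ) + 1 ≤ i → i < j → j ≤ 2 * (w.length : ℤ) + 2 →
        j = i + n + 1 → x i = 0 → x j = 0 → (∀ k : ℤ, i < k → k < j → x k = a) →
        (a = 1 ↔ (n ∈ wordI ∧ (x (i - n), x (j + n)) ∈ setJ) ∨
          (n ∉ wordI ∧ (x (i - n), x (j + n)) ∉ setJ))

/-- The code `C = {0} ∪ {0^{|w|+1} w 0^{|w|+1} : w is stable}`. -/
def codeC : Set (List (Fin 3)) :=
  {[0]} ∪ {u | ∃ w : List (Fin 3), Stable w ∧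
    u = zeros (w.length + 1) ++ w ++ zeros (w.length + 1)}

/-- The coded system `W`: the closure of the set of bi-infinite concatenations of
words from the code `C`. -/
def spaceW : Set (ℤ → Fin 3) := closure {x | IsConcat codeC x}

/-- `W₀ = {x ∈ W : x_i ≠ 0 for only finitely many i}`. -/
def spaceW0 : Set (ℤ → Fin 3) := {x ∈ spaceW | {i : ℤ | x i ≠ 0}.Finite}

/-!
Density: cutting a concatenation of code words outside finitely many blocks and filling in the
code word `0` gives finitely supported concatenations that converge to it.

Determination: apart from `0`, code words are `0^{|w|+1} w 0^{|w|+1}` with `w` stable, so a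
maximal run `0 aⁿ 0` of a point of `W` lies, in a nearby concatenation, inside the stable middle
part of a single code word. There `a` is constant (`12` and `21` do not occur in `w`), and
condition (2) decides whether `a = 1` from `n` and from which of `x_{i-n}`, `x_{j+n}` vanish. In a
point of `W₀` every nonzero coordinate lies in such a run, so it is determined by the zero set.
-/

open Filter

section OccursAt

variable {A : Type*} {u v w : List A} {x : ℤ → A} {i m : ℤ}

theorem OccursAt.apply_eq (h : OccursAt w x i) {k : ℕ} (hk : k < w.length) : x (i + k) = w[k] :=
  h ⟨k, hk⟩

theorem occursAt_singleton {a : A} : OccursAt [a] x i ↔ x i = a := by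
  simp [OccursAt]

theorem occursAt_append :
    OccursAt (u ++ v) x i ↔ OccursAt u x i ∧ OccursAt v x (i + u.length) := by
  simp only [OccursAt, Fin.forall_iff, List.length_append, List.get_eq_getElem]
  constructor
  · intro h
    refine ⟨fun k hk => by simpa [List.getElem_append_left hk] using h k (by omega),
      fun k hk => ?_⟩
    have := h (u.length + k) (by omega)
    rw [List.getElem_append_right (by omega)] at this
    simpa [add_assoc] using this
  · rintro ⟨hu, hv⟩ k hk
    rcases lt_or_ge k u.length with hku | hku
    · rw [List.getElem_append_left hku]; exact hu k hku
    · rw [List.getElem_append_right hku]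
      have := hv (k - u.length) (by omega)
      rwa [add_assoc, ← Nat.cast_add, Nat.add_sub_cancel' hku] at this

theorem occursAt_replicate {n : ℕ} {a : A} :
    OccursAt (List.replicate n a) x i ↔ ∀ p, i ≤ p → p < i + n → x p = a := by
  simp only [OccursAt, Fin.forall_iff, List.length_replicate, List.get_eq_getElem,
    List.getElem_replicate]
  refine ⟨fun h p h1 h2 => ?_, fun h k hk => h _ (by omega) (by omega)⟩
  have := h (p - i).toNat (by omega)
  rwa [show i + ((p - i).toNat : ℤ) = p by omega] at this

theorem occursAt_shiftZ : OccursAt w (shiftZ A m x) i ↔ OccursAt w x (i + m) := by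
  simp only [OccursAt, shiftZ, add_right_comm]

theorem OccursAt.pair_infix (h : OccursAt w x i) {k : ℕ} (hk : k + 1 < w.length) :
    [x (i + k), x (i + k + 1)] <:+: w := by
  have hpair : (w.drop k).take 2 = [x (i + k), x (i + k + 1)] := by
    rw [h.apply_eq (by omega), add_assoc, ← Nat.cast_add_one, h.apply_eq hk,
      List.drop_eq_getElem_cons (by omega), List.drop_eq_getElem_cons hk]
    rfl
  rw [← hpair]
  exact (List.take_prefix 2 _).isInfix.trans (List.drop_suffix k w).isInfix

end OccursAt

theorem StrictMono.add_sub_le {f : ℤ → ℤ} (hf : StrictMono f) {a b : ℤ} (hab : a ≤ b) :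
    f a + (b - a) ≤ f b := by
  induction b, hab using Int.leInduction with
  | base => simp
  | succ n _ ih => have := hf (lt_add_one n); omega

theorem StrictMono.exists_le_lt_succ {f : ℤ → ℤ} (hf : StrictMono f) (n : ℤ) :
    ∃ j, f j ≤ n ∧ n < f (j + 1) := by
  obtain ⟨j, hj, hmax⟩ := Int.exists_greatest_of_bdd (P := fun z => f z ≤ n)
    ⟨max 0 (n - f 0), fun z hz => by
      rcases le_total 0 z with h | h
      · have := hf.add_sub_le h; omega
      · omega⟩
    ⟨min 0 (n - f 0), by have := hf.add_sub_le (min_le_left 0 (n - f 0)); omega⟩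
  exact ⟨j, hj, not_le.1 fun h => by have := hmax (j + 1) h; omega⟩

theorem exists_mem_eqOn_of_mem_closure {ι A : Type*} [TopologicalSpace A] [DiscreteTopology A]
    {S : Set (ι → A)} {x : ι → A} (hx : x ∈ closure S) (F : Finset ι) :
    ∃ y ∈ S, ∀ p ∈ F, y p = x p := by
  have hU : IsOpen ((F : Set ι).pi fun p => {x p}) :=
    isOpen_set_pi F.finite_toSet fun _ _ => isOpen_discrete _
  obtain ⟨y, hyU, hyS⟩ := mem_closure_iff.1 hx _ hU fun p _ => rfl
  exact ⟨y, hyS, fun p hp => hyU p hp⟩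

section Concat

variable {A : Type*} [Zero A] {C : Set (List A)} {x : ℤ → A} {t : ℤ → ℤ}

theorem isConcat_indicator_Ico (h0 : [0] ∈ C) (ht : StrictMono t)
    (hblock : ∀ j, ∃ w ∈ C, t (j + 1) = t j + w.length ∧ OccursAt w x (t j))
    {M N : ℤ} (hMN : M ≤ N) : IsConcat C ((Ico (t M) (t N)).indicator x) := by
  obtain ⟨c, hc⟩ : ∃ c : ℤ → ℤ, ∀ j, c j = max M (min j N) := ⟨_, fun _ => rfl⟩
  -- The new boundaries `s` follow `t` on `[M, N]` and move in steps of one outside it, where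
  -- the blocks are the one-letter word `[0]`.
  let s : ℤ → ℤ := fun j => t (c j) + (j - c j)
  have hs : StrictMono s := strictMono_int_of_lt_succ fun j => by
    rcases (show c (j + 1) = c j ∨ c (j + 1) = c j + 1 by grind) with h | h
    · simp only [s, h]; omega
    · simp only [s, h]; have := ht (lt_add_one (c j)); omega
  refine ⟨s, hs, hs.exists_le_lt_succ, fun j => ?_⟩
  by_cases hj : M ≤ j ∧ j < N
  · obtain ⟨w, hw, hlen, hocc⟩ := hblock j
    have hcj : c j = j ∧ c (j + 1) = j + 1 := by grind
    have hsj : s j = t j := by simp [s, hcj.1]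
    refine ⟨w, hw, by simp [s, hcj.2, hsj, hlen], fun k => ?_⟩
    have hk : (k : ℕ) < (w.length : ℤ) := by exact_mod_cast k.isLt
    have hmem : t j + k ∈ Ico (t M) (t N) :=
      ⟨by have := ht.monotone hj.1; omega,
       by have : t (j + 1) ≤ t N := ht.monotone (by omega); omega⟩
    rw [hsj, indicator_of_mem hmem]
    exact hocc k
  · have hcj : c (j + 1) = c j := by grind
    refine ⟨[0], h0, by simp [s, hcj]; ring, occursAt_singleton.2 (indicator_of_notMem ?_ _)⟩
    rcases not_and_or.1 hj with hj | hj
    · have : c j = M := by grind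
      simp only [s, this, mem_Ico]; omega
    · have : c j = N := by grind
      simp only [s, this, mem_Ico]; omega

theorem IsConcat.mem_closure_finite_support [TopologicalSpace A] (h0 : [0] ∈ C)
    (hx : IsConcat C x) : x ∈ closure {y | IsConcat C y ∧ (support y).Finite} := by
  obtain ⟨t, ht, -, hblock⟩ := hx
  have hmem : ∀ N : ℕ,
      (Ico (t (-N)) (t N)).indicator x ∈ {y | IsConcat C y ∧ (support y).Finite} :=
    fun N => ⟨isConcat_indicator_Ico h0 ht hblock (by omega),
      (finite_Ico _ _).subset support_indicator_subset⟩
  refine mem_closure_of_tendsto ?_ (Eventually.of_forall (f := atTop) hmem)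
  refine tendsto_pi_nhds.2 fun p => tendsto_const_nhds.congr' ?_
  refine eventually_atTop.2 ⟨(p - t 0).natAbs + 1, fun N hN => (indicator_of_mem ?_ x).symm⟩
  have h1 := ht.add_sub_le (show -(N : ℤ) ≤ 0 by omega)
  have h2 := ht.add_sub_le (show 0 ≤ (N : ℤ) by omega)
  constructor <;> omega

end Concat

theorem closure_spaceW0 : closure spaceW0 = spaceW := by
  refine (closure_minimal (fun x hx => hx.1) isClosed_closure).antisymm
    (closure_minimal (fun x hx => ?_) isClosed_closure)
  have hsub : {y | IsConcat codeC y ∧ (support y).Finite} ⊆ spaceW0 :=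
    fun y hy => ⟨subset_closure hy.1, hy.2⟩
  exact closure_mono hsub (IsConcat.mem_closure_finite_support (Or.inl rfl) hx)

section Runs

variable {A : Type*} [Zero A]

structure IsNonzeroRun (x : ℤ → A) (i j : ℤ) : Prop where
  lt : i + 1 < j
  left : x i = 0
  right : x j = 0
  ne_zero : ∀ k, i < k → k < j → x k ≠ 0

theorem IsNonzeroRun.congr {x y : ℤ → A} {i j : ℤ} (h : IsNonzeroRun x i j)
    (hxy : ∀ p, i ≤ p → p ≤ j → y p = x p) : IsNonzeroRun y i j where
  lt := h.lt
  left := by rw [hxy i le_rfl (by have := h.lt; omega)]; exact h.left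
  right := by rw [hxy j (by have := h.lt; omega) le_rfl]; exact h.right
  ne_zero k hk1 hk2 := by rw [hxy k hk1.le hk2.le]; exact h.ne_zero k hk1 hk2

theorem IsNonzeroRun.of_zeros_iff {B : Type*} [Zero B] {x : ℤ → A} {y : ℤ → B} {i j : ℤ}
    (h : IsNonzeroRun x i j) (hxy : ∀ p, x p = 0 ↔ y p = 0) : IsNonzeroRun y i j :=
  ⟨h.lt, (hxy i).1 h.left, (hxy j).1 h.right,
    fun k hk1 hk2 => mt (hxy k).2 (h.ne_zero k hk1 hk2)⟩

theorem exists_isNonzeroRun {x : ℤ → A} (hx : (support x).Finite) {i₀ : ℤ}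
    (h₀ : x i₀ ≠ 0) : ∃ i j, i < i₀ ∧ i₀ < j ∧ IsNonzeroRun x i j := by
  obtain ⟨lo, hlo⟩ := hx.bddBelow
  obtain ⟨hi, hhi⟩ := hx.bddAbove
  have hlo₀ : lo ≤ i₀ := hlo h₀
  have hhi₀ : i₀ ≤ hi := hhi h₀
  have hx_lo : x (lo - 1) = 0 := notMem_support.1 fun h => by have := hlo h; omega
  have hx_hi : x (hi + 1) = 0 := notMem_support.1 fun h => by have := hhi h; omega
  obtain ⟨i, ⟨hi₀, hxi⟩, hmax⟩ := Int.exists_greatest_of_bdd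
    (P := fun z => z < i₀ ∧ x z = 0) ⟨i₀, fun z hz => hz.1.le⟩ ⟨lo - 1, by omega, hx_lo⟩
  obtain ⟨j, ⟨hj₀, hxj⟩, hmin⟩ := Int.exists_least_of_bdd
    (P := fun z => i₀ < z ∧ x z = 0) ⟨i₀, fun z hz => hz.1.le⟩ ⟨hi + 1, by omega, hx_hi⟩
  refine ⟨i, j, hi₀, hj₀, ⟨by omega, hxi, hxj, fun k hk1 hk2 hk => ?_⟩⟩
  rcases lt_trichotomy k i₀ with h | rfl | h
  · have := hmax k ⟨h, hk⟩; omega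
  · exact h₀ hk
  · have := hmin k ⟨h, hk⟩; omega

end Runs

theorem fin_three_eq_one_or_eq_two {a : Fin 3} (ha : a ≠ 0) : a = 1 ∨ a = 2 := by
  fin_cases a <;> simp_all

theorem fin_three_eq_of_eq_one_iff {a b : Fin 3} (ha : a ≠ 0) (hb : b ≠ 0)
    (h : a = 1 ↔ b = 1) : a = b := by
  fin_cases a <;> fin_cases b <;> simp_all

theorem mem_setJ_iff {b c : Fin 3} : (b, c) ∈ setJ ↔ (b = 0 ↔ c = 0) := by
  fin_cases b <;> fin_cases c <;> simp [setJ]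

def padded (w : List (Fin 3)) : List (Fin 3) := zeros (w.length + 1) ++ w ++ zeros (w.length + 1)

theorem length_padded (w : List (Fin 3)) : (padded w).length = 3 * w.length + 2 := by
  simp [padded, zeros]; omega

section Padded

variable {w : List (Fin 3)} {x : ℤ → Fin 3} {s : ℤ}

theorem OccursAt.of_padded (h : OccursAt (padded w) x s) :
    (∀ p, s ≤ p → p ≤ s + w.length → x p = 0) ∧ OccursAt w x (s + w.length + 1) ∧
      ∀ p, s + 2 * w.length + 1 ≤ p → p ≤ s + 3 * w.length + 1 → x p = 0 := by
  simp only [padded, zeros, occursAt_append, occursAt_replicate, List.length_append,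
    List.length_replicate] at h
  obtain ⟨⟨hl, hw⟩, hr⟩ := h
  refine ⟨fun p h1 h2 => hl p h1 (by omega), by simpa [add_assoc] using hw,
    fun p h1 h2 => hr p (by push_cast; omega) (by push_cast; omega)⟩

theorem OccursAt.eq_zero_of_mem_codeC {u : List (Fin 3)} (hu : u ∈ codeC) (h : OccursAt u x s) :
    x s = 0 := by
  rcases hu with rfl | ⟨w, -, rfl⟩
  · exact occursAt_singleton.1 h
  · exact h.of_padded.1 s le_rfl (by omega)

end Padded

namespace Stable

variable {w : List (Fin 3)} {x : ℤ → Fin 3} {s : ℤ}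

theorem eq_of_pair_infix (hw : Stable w) {a b : Fin 3} (ha : a ≠ 0) (hb : b ≠ 0)
    (h : [a, b] <:+: w) : a = b := by
  obtain ⟨h12, h21, -⟩ := hw
  fin_cases a <;> fin_cases b <;> simp_all

theorem eq_one_iff (hw : Stable w) (hocc : OccursAt (padded w) x s) {n : ℕ} (hn : 1 ≤ n)
    {a : Fin 3} (ha : a = 1 ∨ a = 2) {i j : ℤ} (hi : s + w.length ≤ i)
    (hj : j ≤ s + 2 * w.length + 1) (hij : j = i + n + 1) (hxi : x i = 0) (hxj : x j = 0)
    (hconst : ∀ k, i < k → k < j → x k = a) :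
    a = 1 ↔ (n ∈ wordI ↔ (x (i - n), x (j + n)) ∈ setJ) := by
  have hocc' : OccursAt (padded w) (shiftZ _ (s - 1) x) 1 :=
    occursAt_shiftZ.2 (by rwa [add_sub_cancel])
  have h := hw.2.2 _ hocc' n a (i - (s - 1)) (j - (s - 1)) hn (by omega) ha (by omega) (by omega)
    (by omega) (by omega) (by simpa [shiftZ]) (by simpa [shiftZ])
    (fun k hk1 hk2 => hconst _ (by omega) (by omega))
  simp only [shiftZ, sub_add_cancel, add_right_comm _ (n : ℤ)] at h
  rwa [show i - (s - 1) - n + (s - 1) = i - n by ring, ← iff_iff_and_or_not_and_not] at h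

theorem isConst_of_isNonzeroRun (hw : Stable w) (hocc : OccursAt (padded w) x s) {i j : ℤ}
    (hi : s + w.length ≤ i) (hj : j ≤ s + 2 * w.length + 1) (hrun : IsNonzeroRun x i j) :
    ∀ k, i < k → k < j → x k = x (i + 1) := by
  have hmid := hocc.of_padded.2.1
  have hstep : ∀ p, i < p → p + 1 < j → x (p + 1) = x p := fun p hp1 hp2 => by
    obtain ⟨k, rfl⟩ : ∃ k : ℕ, p = s + w.length + 1 + k :=
      ⟨(p - (s + w.length + 1)).toNat, by omega⟩
    exact (hw.eq_of_pair_infix (hrun.ne_zero _ hp1 (by omega)) (hrun.ne_zero _ (by omega) hp2)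
      (hmid.pair_infix (by omega))).symm
  intro k hk1 hk2
  induction k, (show i + 1 ≤ k by omega) using Int.leInduction with
  | base => rfl
  | succ k hk ih => rw [hstep k (by omega) hk2, ih (by omega) (by omega)]

end Stable

/-- Every code word starts with `0`, so a nonzero run cannot cross a block boundary, and inside
`padded w` the nonzero symbols all lie in `w`. -/
theorem IsConcat.exists_stable_of_isNonzeroRun {y : ℤ → Fin 3} (hy : IsConcat codeC y)
    {i j : ℤ} (hrun : IsNonzeroRun y i j) :
    ∃ w, Stable w ∧ ∃ s, OccursAt (padded w) y s ∧ s + w.length ≤ i ∧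
      j ≤ s + 2 * w.length + 1 := by
  obtain ⟨t, -, hcover, hblock⟩ := hy
  have hstart : ∀ k, y (t k) = 0 := fun k =>
    let ⟨_, hu, _, hocc⟩ := hblock k
    hocc.eq_zero_of_mem_codeC hu
  have hlt := hrun.lt
  obtain ⟨k, hk1, hk2⟩ := hcover (i + 1)
  have hki : t k ≤ i := by
    by_contra! h
    have hk : t k = i + 1 := by omega
    exact hrun.ne_zero (i + 1) (by omega) (by omega) (hk ▸ hstart k)
  have hkj : j ≤ t (k + 1) := not_lt.1 fun h => hrun.ne_zero _ (by omega) h (hstart _)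
  obtain ⟨u, hu, hlen, hocc⟩ := hblock k
  rcases hu with rfl | ⟨w, hw, rfl⟩
  · simp only [List.length_singleton, Nat.cast_one] at hlen
    omega
  · change OccursAt (padded w) y (t k) at hocc
    change _ = _ + ((padded w).length : ℤ) at hlen
    rw [length_padded] at hlen
    push_cast at hlen
    obtain ⟨hzl, -, hzr⟩ := hocc.of_padded
    refine ⟨w, hw, t k, hocc, not_lt.1 fun h => ?_, not_lt.1 fun h => ?_⟩
    · exact hrun.ne_zero (i + 1) (by omega) (by omega) (hzl _ (by omega) (by omega))
    · exact hrun.ne_zero (j - 1) (by omega) (by omega) (hzr _ (by omega) (by omega))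

theorem IsNonzeroRun.of_mem_spaceW {x : ℤ → Fin 3} (hx : x ∈ spaceW) {i j : ℤ} {n : ℕ}
    (hrun : IsNonzeroRun x i j) (hij : j = i + n + 1) :
    (∀ k, i < k → k < j → x k = x (i + 1)) ∧
      (x (i + 1) = 1 ↔ (n ∈ wordI ↔ (x (i - n) = 0 ↔ x (j + n) = 0))) := by
  have hlt := hrun.lt
  obtain ⟨y, hy, hyx⟩ := exists_mem_eqOn_of_mem_closure hx (Finset.Icc (i - n) (j + n))
  have hagree : ∀ p, i - n ≤ p → p ≤ j + n → y p = x p := fun p h1 h2 =>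
    hyx p (Finset.mem_Icc.2 ⟨h1, h2⟩)
  have hrun_y := hrun.congr fun p h1 h2 => hagree p (by omega) (by omega)
  obtain ⟨w, hw, s, hocc, hi, hj⟩ := hy.exists_stable_of_isNonzeroRun hrun_y
  have hconst := hw.isConst_of_isNonzeroRun hocc hi hj hrun_y
  have hone := hw.eq_one_iff hocc (by omega)
    (fin_three_eq_one_or_eq_two (hrun_y.ne_zero (i + 1) (by omega) (by omega))) hi hj hij
    hrun_y.left hrun_y.right hconst
  rw [← hagree (i + 1) (by omega) (by omega), hone, mem_setJ_iff,
    hagree (i - n) le_rfl (by omega), hagree (j + n) (by omega) le_rfl]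
  refine ⟨fun k hk1 hk2 => ?_, Iff.rfl⟩
  rw [← hagree k (by omega) (by omega), hconst k hk1 hk2]

theorem eq_of_mem_spaceW0_of_zeros_iff {x x' : ℤ → Fin 3} (hx : x ∈ spaceW0)
    (hx' : x' ∈ spaceW0) (hZ : ∀ p, x p = 0 ↔ x' p = 0) : x = x' := by
  funext i₀
  by_cases h₀ : x i₀ = 0
  · rw [h₀, (hZ i₀).1 h₀]
  obtain ⟨i, j, hi, hj, hrun⟩ := exists_isNonzeroRun hx.2 h₀
  have hlt := hrun.lt
  obtain ⟨n, hij⟩ : ∃ n : ℕ, j = i + n + 1 := ⟨(j - i - 1).toNat, by omega⟩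
  have hrun' := hrun.of_zeros_iff hZ
  obtain ⟨hconst, hone⟩ := hrun.of_mem_spaceW hx.1 hij
  obtain ⟨hconst', hone'⟩ := hrun'.of_mem_spaceW hx'.1 hij
  rw [hconst i₀ hi hj, hconst' i₀ hi hj]
  refine fin_three_eq_of_eq_one_iff (hrun.ne_zero _ (by omega) hlt)
    (hrun'.ne_zero _ (by omega) hlt) ?_
  rw [hone, hone', hZ, hZ]

/-- `W₀` is dense in `W`, and a point of `W₀` is determined by its set of zero
coordinates: if `x, x' ∈ W₀` and `Z(x) = Z(x')` then `x = x'`. -/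
theorem W0_dense_and_determined :
    closure spaceW0 = spaceW ∧
    ∀ x ∈ spaceW0, ∀ x' ∈ spaceW0,
      {i : ℤ | x i = 0} = {i : ℤ | x' i = 0} → x = x' :=
  ⟨closure_spaceW0, fun _ hx _ hx' hZ =>
    eq_of_mem_spaceW0_of_zeros_iff hx hx' (Set.ext_iff.1 hZ)⟩
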